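/- Let d, n ≥ 1 and M ≥ 0. There exists a constant C > 0, depending only on d, n and M, with the following property. Let W : ℝ^d → M_n(ℂ) be measurable with Frobenius norm |W(x)| ≤ M almost everywhere, and let η ∈ (0,1] and ρ ≥ 0 be such that η^{−d} ∫_{□_γ^η} |W(x)|² dx ≤ ρ for every γ ∈ ℤ^d. Then for every continuously differentiable compactly supported u : ℝ^d → ℂⁿ one has ( ∫_{ℝ^d} |W(x) u(x)|² dx )^{1/2} ≤ C (ρ^{1/2} + η^{1/2}) ‖u‖_{H¹}. -/

import Mathlib

/-!
On a cell `Q` of side `η`, with `w = |W|²` and `g = |u|²`,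
`∫_Q w g ≤ (∫_Q w) ⨍_Q g + M² ∫_Q |g - ⨍_Q g|`. The first term is at most `ρ ∫_Q g` by the
hypothesis on the cell averages of `w`. The second is controlled by the `L¹` Poincaré inequality
`∫_Q |g - ⨍_Q g| ≤ 2^d diam(Q) ∫_Q |∇g|` on a convex set: write `g x - g y` as an integral of
`∇g` along the segment from `y` to `x`, and for the half of the segment nearer to `x` (resp. `y`)
integrate out `y` (resp. `x`) through a homothety of ratio at least `1/2`, which costs at most
`2^d`. Summing over the cells, with `diam Q = √d η` and `|∇g| ≤ 2|u||Du| ≤ |u|² + |Du|²`, gives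
`∫ |Wu|² ≤ (ρ + 2^d √d M² η) ‖u‖²_{H¹}`.
-/

open MeasureTheory

noncomputable section

/-- `ℝ^d` with its Euclidean structure. -/
abbrev Ed (d : ℕ) := EuclideanSpace ℝ (Fin d)

/-- `ℂⁿ` with its Euclidean (Hermitian) structure. -/
abbrev Cn (n : ℕ) := EuclideanSpace ℂ (Fin n)

/-- The cell `□_γ^η = η•γ + [0,η]^d` of the rescaled lattice `ηℤ^d`. -/
def cell (d : ℕ) (η : ℝ) (γ : Fin d → ℤ) : Set (Ed d) :=
  {x | ∀ i, η * γ i ≤ x i ∧ x i ≤ η * γ i + η}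

/-- Frobenius norm of a complex `n × n` matrix. -/
def frob {n : ℕ} (A : Matrix (Fin n) (Fin n) ℂ) : ℝ :=
  Real.sqrt (∑ i, ∑ k, ‖A i k‖ ^ 2)

/-- Action of a matrix on a vector of `ℂⁿ`. -/
def matAct {n : ℕ} (A : Matrix (Fin n) (Fin n) ℂ) (v : Cn n) : Cn n :=
  WithLp.toLp 2 (fun i => ∑ k, A i k * v k)

/-- The `H¹` norm `(∫|u|² + ∫‖Du‖²)^{1/2}`, `Du` the total derivative. -/
def hnorm {d n : ℕ} (u : Ed d → Cn n) : ℝ :=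
  Real.sqrt ((∫ x, ‖u x‖ ^ 2) + ∫ x, ‖fderiv ℝ u x‖ ^ 2)

open Set AffineMap Module
open scoped ENNReal

theorem enorm_sub_le_lintegral_fderiv_lineMap {E F : Type*} [NormedAddCommGroup E]
    [NormedSpace ℝ E] [NormedAddCommGroup F] [NormedSpace ℝ F] [CompleteSpace F] {g : E → F}
    (hg : ContDiff ℝ 1 g) (x y : E) :
    ‖g x - g y‖ₑ ≤ ‖x - y‖ₑ * ∫⁻ t in Icc (0 : ℝ) 1, ‖fderiv ℝ g (lineMap y x t)‖ₑ := by
  have hderiv : ∀ t : ℝ, HasDerivAt (g ∘ lineMap y x)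
      (fderiv ℝ g (lineMap y x t) (x - y)) t := fun t =>
    ((hg.differentiable one_ne_zero) _).hasFDerivAt.comp_hasDerivAt t hasDerivAt_lineMap
  have hcont : Continuous fun t : ℝ => fderiv ℝ g (lineMap y x t) (x - y) :=
    ((hg.continuous_fderiv one_ne_zero).comp lineMap_continuous).clm_apply continuous_const
  have hftc : g x - g y = ∫ t in (0 : ℝ)..1, fderiv ℝ g (lineMap y x t) (x - y) := by
    rw [intervalIntegral.integral_eq_sub_of_hasDerivAt (fun t _ => hderiv t)
      (hcont.intervalIntegrable 0 1)]
    simp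
  calc ‖g x - g y‖ₑ ≤ ∫⁻ t in Ioc (0 : ℝ) 1, ‖fderiv ℝ g (lineMap y x t) (x - y)‖ₑ := by
        rw [hftc, intervalIntegral.integral_of_le zero_le_one]
        exact enorm_integral_le_lintegral_enorm _
    _ ≤ ∫⁻ t in Ioc (0 : ℝ) 1, ‖fderiv ℝ g (lineMap y x t)‖ₑ * ‖x - y‖ₑ :=
        lintegral_mono fun t => ContinuousLinearMap.le_opENorm _ _
    _ = ‖x - y‖ₑ * ∫⁻ t in Icc (0 : ℝ) 1, ‖fderiv ℝ g (lineMap y x t)‖ₑ := by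
        rw [lintegral_mul_const' _ _ enorm_ne_top, setLIntegral_congr Ioc_ae_eq_Icc, mul_comm]

section Average

variable {α F : Type*} [MeasurableSpace α] [NormedAddCommGroup F] [NormedSpace ℝ F]
  [CompleteSpace F]

theorem enorm_sub_average_le_laverage {ν : Measure α} [IsFiniteMeasure ν] [NeZero ν]
    {g : α → F} (hg : Integrable g ν) (c : F) :
    ‖c - ⨍ y, g y ∂ν‖ₑ ≤ ⨍⁻ y, ‖c - g y‖ₑ ∂ν := by
  rw [average_eq', laverage_eq']
  calc ‖c - ∫ y, g y ∂(ν univ)⁻¹ • ν‖ₑ = ‖∫ y, (c - g y) ∂(ν univ)⁻¹ • ν‖ₑ := by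
        rw [integral_sub (integrable_const c) hg.to_average, integral_const, probReal_univ,
          one_smul]
    _ ≤ _ := enorm_integral_le_lintegral_enorm _

theorem setIntegral_mul_le_mul_setAverage_add {Q : Set α} {μ : Measure α} (hQ : μ Q ≠ ∞)
    {w g : α → ℝ} {K : ℝ} (hw : AEStronglyMeasurable w (μ.restrict Q))
    (hw0 : ∀ᵐ x ∂μ.restrict Q, 0 ≤ w x) (hwK : ∀ᵐ x ∂μ.restrict Q, w x ≤ K)
    (hg : IntegrableOn g Q μ) :
    ∫ x in Q, w x * g x ∂μ
      ≤ (∫ x in Q, w x ∂μ) * ⨍ x in Q, g x ∂μ + K * ∫ x in Q, |g x - ⨍ y in Q, g y ∂μ| ∂μ := by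
  have : Fact (μ Q < ∞) := ⟨hQ.lt_top⟩
  set c := ⨍ y in Q, g y ∂μ
  have hwbound : ∀ᵐ x ∂μ.restrict Q, ‖w x‖ ≤ K := by
    filter_upwards [hw0, hwK] with x h0 hK
    rwa [Real.norm_of_nonneg h0]
  have hwi : Integrable w (μ.restrict Q) := .of_bound hw K hwbound
  have hgc : Integrable (fun x => |g x - c|) (μ.restrict Q) := (hg.sub (integrable_const c)).abs
  calc ∫ x in Q, w x * g x ∂μ ≤ ∫ x in Q, (w x * c + K * |g x - c|) ∂μ := by
        refine integral_mono_ae (hg.bdd_mul hw hwbound)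
          ((hwi.mul_const c).add (hgc.const_mul K)) ?_
        filter_upwards [hw0, hwK] with x h0 hK
        have := mul_le_mul_of_nonneg_left (le_abs_self (g x - c)) h0
        nlinarith [mul_le_mul_of_nonneg_right hK (abs_nonneg (g x - c))]
    _ = (∫ x in Q, w x ∂μ) * c + K * ∫ x in Q, |g x - c| ∂μ := by
        rw [integral_add (hwi.mul_const c) (hgc.const_mul K), integral_mul_const,
          integral_const_mul]

end Average

section Poincare

variable {E F : Type*} [NormedAddCommGroup E] [NormedSpace ℝ E]
  [NormedAddCommGroup F] [NormedSpace ℝ F]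
  [FiniteDimensional ℝ E] [MeasurableSpace E] [BorelSpace E] (μ : Measure E) [μ.IsAddHaarMeasure]

theorem map_homothety_addHaar (x : E) {r : ℝ} (hr : r ≠ 0) :
    μ.map (homothety x r) = ENNReal.ofReal |(r ^ finrank ℝ E)⁻¹| • μ := by
  have : (homothety x r : E → E) = (· + (x - r • x)) ∘ (r • ·) := by
    ext y; simp [homothety_apply, smul_sub]; abel
  rw [this, ← Measure.map_map (measurable_add_const _) (measurable_const_smul r),
    Measure.map_addHaar_smul μ hr, Measure.map_smul, map_add_right_eq_self]

theorem setLIntegral_comp_homothety_le {Q : Set E} (hQ : Convex ℝ Q) (hQm : MeasurableSet Q)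
    {f : E → ℝ≥0∞} (hf : Measurable f) {x : E} (hx : x ∈ Q) {r : ℝ} (hr : 1 / 2 ≤ r)
    (hr1 : r ≤ 1) :
    ∫⁻ y in Q, f (homothety x r y) ∂μ ≤ 2 ^ finrank ℝ E * ∫⁻ y in Q, f y ∂μ := by
  have hr0 : 0 < r := by linarith
  have hmaps : ∀ y ∈ Q, homothety x r y ∈ Q := fun y hy => by
    rw [homothety_eq_lineMap]
    exact hQ.lineMap_mem hx hy ⟨hr0.le, hr1⟩
  have hscale : ENNReal.ofReal |(r ^ finrank ℝ E)⁻¹| ≤ 2 ^ finrank ℝ E := by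
    rw [abs_of_pos (by positivity), ← inv_pow, ENNReal.ofReal_pow (by positivity)]
    gcongr
    rw [ENNReal.ofReal_le_iff_le_toReal (by simp)]
    simpa using inv_anti₀ (by norm_num) hr
  calc ∫⁻ y in Q, f (homothety x r y) ∂μ = ∫⁻ y in Q, Q.indicator f (homothety x r y) ∂μ :=
        setLIntegral_congr_fun hQm fun y hy => (indicator_of_mem (hmaps y hy) f).symm
    _ ≤ ∫⁻ y, Q.indicator f (homothety x r y) ∂μ := setLIntegral_le_lintegral _ _
    _ = ENNReal.ofReal |(r ^ finrank ℝ E)⁻¹| * ∫⁻ y in Q, f y ∂μ := by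
        rw [← lintegral_map (hf.indicator hQm) (homothety_continuous x r).measurable,
          map_homothety_addHaar μ x hr0.ne', lintegral_smul_measure, lintegral_indicator hQm,
          smul_eq_mul]
    _ ≤ 2 ^ finrank ℝ E * ∫⁻ y in Q, f y ∂μ := by gcongr

-- For `t ≤ 1 / 2`, `lineMap y x t` is the image of `y` under the homothety of ratio `1 - t`
-- about `x`; for `t ≥ 1 / 2` exchange the roles of `x` and `y`.
theorem lintegral_lintegral_comp_lineMap_le {Q : Set E} (hQ : Convex ℝ Q) (hQm : MeasurableSet Q)
    {f : E → ℝ≥0∞} (hf : Measurable f) {t : ℝ} (ht : t ∈ Icc (0 : ℝ) 1) :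
    ∫⁻ x in Q, ∫⁻ y in Q, f (lineMap y x t) ∂μ ∂μ ≤ 2 ^ finrank ℝ E * μ Q * ∫⁻ z in Q, f z ∂μ := by
  have hbound : ∀ r ∈ Icc (1 / 2 : ℝ) 1, ∫⁻ _x in Q, ∫⁻ y in Q, f (homothety _x r y) ∂μ ∂μ
      ≤ 2 ^ finrank ℝ E * μ Q * ∫⁻ z in Q, f z ∂μ := fun r hr => calc
    _ ≤ ∫⁻ _x in Q, 2 ^ finrank ℝ E * ∫⁻ z in Q, f z ∂μ ∂μ :=
        setLIntegral_mono' hQm fun x hx =>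
          setLIntegral_comp_homothety_le μ hQ hQm hf hx hr.1 hr.2
    _ = _ := by rw [setLIntegral_const]; ring
  rcases le_total t (1 / 2) with h | h
  · simpa [homothety_eq_lineMap, lineMap_apply_one_sub] using
      hbound (1 - t) ⟨by linarith, by linarith [ht.1]⟩
  · rw [lintegral_lintegral_swap]
    · simpa [homothety_eq_lineMap] using hbound t ⟨h, ht.2⟩
    · exact (hf.comp (by fun_prop)).aemeasurable

theorem lintegral_lintegral_lintegral_comp_lineMap_le {Q : Set E} (hQ : Convex ℝ Q)
    (hQm : MeasurableSet Q) {f : E → ℝ≥0∞} (hf : Measurable f) :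
    ∫⁻ x in Q, ∫⁻ y in Q, (∫⁻ t in Icc (0 : ℝ) 1, f (lineMap y x t)) ∂μ ∂μ
      ≤ 2 ^ finrank ℝ E * μ Q * ∫⁻ z in Q, f z ∂μ := by
  calc ∫⁻ x in Q, ∫⁻ y in Q, (∫⁻ t in Icc (0 : ℝ) 1, f (lineMap y x t)) ∂μ ∂μ
      = ∫⁻ x in Q, (∫⁻ t in Icc (0 : ℝ) 1, ∫⁻ y in Q, f (lineMap y x t) ∂μ) ∂μ :=
        setLIntegral_congr_fun hQm fun x _ =>
          lintegral_lintegral_swap (hf.comp (by fun_prop)).aemeasurable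
    _ = ∫⁻ t in Icc (0 : ℝ) 1, ∫⁻ x in Q, ∫⁻ y in Q, f (lineMap y x t) ∂μ ∂μ := by
        have hinner : Measurable fun p : (E × ℝ) × E => f (lineMap p.2 p.1.1 p.1.2) :=
          hf.comp (by fun_prop)
        exact lintegral_lintegral_swap hinner.lintegral_prod_right'.aemeasurable
    _ ≤ ∫⁻ _t in Icc (0 : ℝ) 1, 2 ^ finrank ℝ E * μ Q * ∫⁻ z in Q, f z ∂μ :=
        setLIntegral_mono' measurableSet_Icc fun t ht =>
          lintegral_lintegral_comp_lineMap_le μ hQ hQm hf ht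
    _ = 2 ^ finrank ℝ E * μ Q * ∫⁻ z in Q, f z ∂μ := by simp

theorem Convex.lintegral_enorm_sub_setAverage_le [CompleteSpace F] {Q : Set E}
    (hQ : Convex ℝ Q) (hQc : IsCompact Q) {g : E → F} (hg : ContDiff ℝ 1 g) :
    ∫⁻ x in Q, ‖g x - ⨍ y in Q, g y ∂μ‖ₑ ∂μ
      ≤ 2 ^ finrank ℝ E * Metric.ediam Q * ∫⁻ x in Q, ‖fderiv ℝ g x‖ₑ ∂μ := by
  rcases eq_or_ne (μ Q) 0 with hQ0 | hQ0
  · simp [Measure.restrict_eq_zero.2 hQ0]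
  have hQfin : μ Q ≠ ∞ := hQc.measure_lt_top.ne
  have : Fact (μ Q < ∞) := ⟨hQfin.lt_top⟩
  have : NeZero (μ.restrict Q) := ⟨by simpa [Measure.restrict_eq_zero] using hQ0⟩
  have hQm : MeasurableSet Q := hQc.isClosed.measurableSet
  have hdiam : Metric.ediam Q ≠ ∞ := hQc.isBounded.ediam_ne_top
  have hDg : Measurable fun z => ‖fderiv ℝ g z‖ₑ :=
    (hg.continuous_fderiv one_ne_zero).enorm.measurable
  calc ∫⁻ x in Q, ‖g x - ⨍ y in Q, g y ∂μ‖ₑ ∂μ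
      ≤ ∫⁻ x in Q, (μ Q)⁻¹ * ∫⁻ y in Q, Metric.ediam Q *
          (∫⁻ t in Icc (0 : ℝ) 1, ‖fderiv ℝ g (lineMap y x t)‖ₑ) ∂μ ∂μ := by
        refine setLIntegral_mono' hQm fun x hx => ?_
        refine (enorm_sub_average_le_laverage
          (hg.continuous.continuousOn.integrableOn_compact hQc) (g x)).trans ?_
        rw [setLAverage_eq, ENNReal.div_eq_inv_mul]
        gcongr (μ Q)⁻¹ * ?_
        refine setLIntegral_mono' hQm fun y hy => ?_
        refine (enorm_sub_le_lintegral_fderiv_lineMap hg x y).trans ?_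
        gcongr
        rw [← edist_eq_enorm_sub]
        exact Metric.edist_le_ediam_of_mem hx hy
    _ = (μ Q)⁻¹ * Metric.ediam Q * ∫⁻ x in Q, ∫⁻ y in Q,
          (∫⁻ t in Icc (0 : ℝ) 1, ‖fderiv ℝ g (lineMap y x t)‖ₑ) ∂μ ∂μ := by
        rw [lintegral_const_mul' _ _ (ENNReal.inv_ne_top.2 hQ0)]
        simp_rw [lintegral_const_mul' _ _ hdiam]
        rw [mul_assoc]
    _ ≤ (μ Q)⁻¹ * Metric.ediam Q * (2 ^ finrank ℝ E * μ Q * ∫⁻ x in Q, ‖fderiv ℝ g x‖ₑ ∂μ) := by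
        gcongr
        exact lintegral_lintegral_lintegral_comp_lineMap_le μ hQ hQm hDg
    _ = (μ Q)⁻¹ * μ Q * (2 ^ finrank ℝ E * Metric.ediam Q * ∫⁻ x in Q, ‖fderiv ℝ g x‖ₑ ∂μ) := by
        ring
    _ = 2 ^ finrank ℝ E * Metric.ediam Q * ∫⁻ x in Q, ‖fderiv ℝ g x‖ₑ ∂μ := by
        rw [ENNReal.inv_mul_cancel hQ0 hQfin, one_mul]

theorem Convex.setIntegral_norm_sub_setAverage_le [CompleteSpace F] {Q : Set E}
    (hQ : Convex ℝ Q) (hQc : IsCompact Q) {g : E → F} (hg : ContDiff ℝ 1 g) :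
    ∫ x in Q, ‖g x - ⨍ y in Q, g y ∂μ‖ ∂μ
      ≤ 2 ^ finrank ℝ E * Metric.diam Q * ∫ x in Q, ‖fderiv ℝ g x‖ ∂μ := by
  have hDg : IntegrableOn (fun x => fderiv ℝ g x) Q μ :=
    (hg.continuous_fderiv one_ne_zero).continuousOn.integrableOn_compact hQc
  have hgc : Continuous fun x => g x - ⨍ y in Q, g y ∂μ := hg.continuous.sub continuous_const
  rw [integral_norm_eq_lintegral_enorm hgc.aestronglyMeasurable,
    integral_norm_eq_lintegral_enorm hDg.aestronglyMeasurable, Metric.diam,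
    ← ENNReal.toReal_ofNat, ← ENNReal.toReal_pow, ← ENNReal.toReal_mul, ← ENNReal.toReal_mul]
  refine ENNReal.toReal_mono ?_ (hQ.lintegral_enorm_sub_setAverage_le μ hQc hg)
  exact ENNReal.mul_ne_top (ENNReal.mul_ne_top (by simp) hQc.isBounded.ediam_ne_top)
    hDg.hasFiniteIntegral.ne

theorem Convex.setIntegral_mul_le {Q : Set E} (hQ : Convex ℝ Q) (hQc : IsCompact Q)
    {g w : E → ℝ} {K ρ : ℝ} (hg : ContDiff ℝ 1 g) (hg0 : ∀ x, 0 ≤ g x) (hK : 0 ≤ K)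
    (hw : AEStronglyMeasurable w (μ.restrict Q)) (hw0 : ∀ᵐ x ∂μ.restrict Q, 0 ≤ w x)
    (hwK : ∀ᵐ x ∂μ.restrict Q, w x ≤ K) (hρ : ∫ x in Q, w x ∂μ ≤ ρ * μ.real Q) :
    ∫ x in Q, w x * g x ∂μ
      ≤ ρ * ∫ x in Q, g x ∂μ
        + K * 2 ^ finrank ℝ E * Metric.diam Q * ∫ x in Q, ‖fderiv ℝ g x‖ ∂μ := by
  have hQfin : μ Q ≠ ∞ := hQc.measure_lt_top.ne
  have havg : 0 ≤ ⨍ x in Q, g x ∂μ := by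
    rw [setAverage_eq]
    exact smul_nonneg (by positivity) (integral_nonneg hg0)
  have hpoinc : ∫ x in Q, |g x - ⨍ y in Q, g y ∂μ| ∂μ
      ≤ 2 ^ finrank ℝ E * Metric.diam Q * ∫ x in Q, ‖fderiv ℝ g x‖ ∂μ := by
    simpa only [Real.norm_eq_abs] using hQ.setIntegral_norm_sub_setAverage_le μ hQc hg
  calc ∫ x in Q, w x * g x ∂μ
      ≤ (∫ x in Q, w x ∂μ) * ⨍ x in Q, g x ∂μ
        + K * ∫ x in Q, |g x - ⨍ y in Q, g y ∂μ| ∂μ :=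
        setIntegral_mul_le_mul_setAverage_add hQfin hw hw0 hwK
          (hg.continuous.continuousOn.integrableOn_compact hQc)
    _ ≤ ρ * μ.real Q * ⨍ x in Q, g x ∂μ
        + K * (2 ^ finrank ℝ E * Metric.diam Q * ∫ x in Q, ‖fderiv ℝ g x‖ ∂μ) := by
        gcongr
    _ = _ := by
        rw [mul_assoc ρ, ← smul_eq_mul (μ.real Q), measure_smul_setAverage _ hQfin]
        ring

end Poincare

section NormSq

variable {E F : Type*} [NormedAddCommGroup E] [NormedSpace ℝ E] [NormedAddCommGroup F]
  [InnerProductSpace ℝ F]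

theorem norm_fderiv_norm_sq_le {u : E → F} {x : E} (hu : DifferentiableAt ℝ u x) :
    ‖fderiv ℝ (fun y => ‖u y‖ ^ 2) x‖ ≤ 2 * ‖u x‖ * ‖fderiv ℝ u x‖ := by
  rw [hu.hasFDerivAt.norm_sq.fderiv]
  calc ‖2 • (innerSL ℝ (u x)).comp (fderiv ℝ u x)‖
      ≤ 2 * ‖(innerSL ℝ (u x)).comp (fderiv ℝ u x)‖ :=
        norm_nsmul_le.trans_eq (by norm_num)
    _ ≤ 2 * (‖innerSL ℝ (u x)‖ * ‖fderiv ℝ u x‖) := by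
        gcongr
        exact ContinuousLinearMap.opNorm_comp_le _ _
    _ = 2 * ‖u x‖ * ‖fderiv ℝ u x‖ := by rw [innerSL_apply_norm, mul_assoc]

theorem integral_norm_fderiv_norm_sq_le [MeasurableSpace E] [OpensMeasurableSpace E]
    {μ : Measure E} [IsFiniteMeasureOnCompacts μ] {u : E → F} (hu : ContDiff ℝ 1 u)
    (hs : HasCompactSupport u) :
    ∫ x, ‖fderiv ℝ (fun y => ‖u y‖ ^ 2) x‖ ∂μ
      ≤ ∫ x, ‖u x‖ ^ 2 ∂μ + ∫ x, ‖fderiv ℝ u x‖ ^ 2 ∂μ := by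
  have hus : HasCompactSupport fun x => ‖u x‖ ^ 2 :=
    hs.comp_left (g := fun z : F => ‖z‖ ^ 2) (by simp)
  have hDus : HasCompactSupport fun x => ‖fderiv ℝ u x‖ ^ 2 :=
    (hs.fderiv ℝ).comp_left (g := fun L : E →L[ℝ] F => ‖L‖ ^ 2) (by simp)
  have hui : Integrable (fun x => ‖u x‖ ^ 2) μ :=
    (hu.continuous.norm.pow 2).integrable_of_hasCompactSupport hus
  have hDui : Integrable (fun x => ‖fderiv ℝ u x‖ ^ 2) μ :=
    ((hu.continuous_fderiv one_ne_zero).norm.pow 2).integrable_of_hasCompactSupport hDus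
  rw [← integral_add hui hDui]
  refine integral_mono_of_nonneg (ae_of_all _ fun x => norm_nonneg _) (hui.add hDui)
    (ae_of_all _ fun x => ?_)
  have := norm_fderiv_norm_sq_le (hu.differentiable one_ne_zero x)
  nlinarith [sq_nonneg (‖u x‖ - ‖fderiv ℝ u x‖)]

end NormSq

theorem norm_matAct_sq_le {n : ℕ} (A : Matrix (Fin n) (Fin n) ℂ) (v : Cn n) :
    ‖matAct A v‖ ^ 2 ≤ frob A ^ 2 * ‖v‖ ^ 2 := by
  rw [EuclideanSpace.norm_sq_eq, EuclideanSpace.norm_sq_eq, frob, Real.sq_sqrt (by positivity),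
    Finset.sum_mul]
  refine Finset.sum_le_sum fun i _ => ?_
  calc ‖∑ k, A i k * v k‖ ^ 2 ≤ (∑ k, ‖A i k‖ * ‖v k‖) ^ 2 := by
        gcongr
        exact (norm_sum_le _ _).trans_eq (by simp_rw [norm_mul])
    _ ≤ (∑ k, ‖A i k‖ ^ 2) * ∑ k, ‖v k‖ ^ 2 := Finset.sum_mul_sq_le_sq_mul_sq _ _ _

section Cells

variable {d : ℕ} {η : ℝ}

theorem cell_eq_preimage_ofLp (γ : Fin d → ℤ) :
    cell d η γ = WithLp.ofLp ⁻¹' univ.pi fun i => Icc (η * γ i) (η * γ i + η) := by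
  ext x
  simp only [cell, mem_ofPred_eq, mem_preimage, mem_univ_pi, mem_Icc]

theorem isCompact_cell (γ : Fin d → ℤ) : IsCompact (cell d η γ) := by
  rw [cell_eq_preimage_ofLp]
  exact (PiLp.continuousLinearEquiv 2 ℝ fun _ : Fin d => ℝ).toHomeomorph.isCompact_preimage.2
    (isCompact_univ_pi fun _ => isCompact_Icc)

theorem convex_cell (γ : Fin d → ℤ) : Convex ℝ (cell d η γ) := by
  rw [cell_eq_preimage_ofLp]
  exact (convex_pi fun _ _ => convex_Icc _ _).linear_preimage
    (PiLp.continuousLinearEquiv 2 ℝ fun _ : Fin d => ℝ).toLinearMap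

theorem volume_cell (γ : Fin d → ℤ) : volume (cell d η γ) = ENNReal.ofReal η ^ d := by
  rw [cell_eq_preimage_ofLp, (PiLp.volume_preserving_ofLp (Fin d)).measure_preimage
    (MeasurableSet.univ_pi fun i => measurableSet_Icc).nullMeasurableSet, volume_pi_pi]
  simp

theorem volume_real_cell (hη : 0 ≤ η) (γ : Fin d → ℤ) :
    volume.real (cell d η γ) = η ^ d := by
  rw [measureReal_def, volume_cell, ENNReal.toReal_pow, ENNReal.toReal_ofReal hη]

theorem diam_cell_le (hη : 0 ≤ η) (γ : Fin d → ℤ) : Metric.diam (cell d η γ) ≤ √d * η := by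
  refine Metric.diam_le_of_forall_dist_le (by positivity) fun x hx y hy => ?_
  have hcoord : ∀ i, dist (x i) (y i) ^ 2 ≤ η ^ 2 := fun i => by
    have h := Real.dist_le_of_mem_Icc (hx i) (hy i)
    rw [add_sub_cancel_left] at h
    exact pow_le_pow_left₀ dist_nonneg h 2
  calc dist x y = √(∑ i, dist (x i) (y i) ^ 2) := EuclideanSpace.dist_eq x y
    _ ≤ √(∑ _i : Fin d, η ^ 2) := Real.sqrt_le_sqrt (Finset.sum_le_sum fun i _ => hcoord i)
    _ = √d * η := by simp [Real.sqrt_mul (Nat.cast_nonneg d), Real.sqrt_sq hη]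

theorem mem_Ico_iff_floor_div_eq (hη : 0 < η) {x : ℝ} {m : ℤ} :
    x ∈ Ico (η * m) (η * m + η) ↔ ⌊x / η⌋ = m := by
  rw [Int.floor_eq_iff, le_div_iff₀ hη, div_lt_iff₀ hη, mem_Ico, mul_comm, add_mul, one_mul]

theorem hasSum_integral_cell (hη : 0 < η) {f : Ed d → ℝ} (hf : Integrable f) :
    HasSum (fun γ => ∫ x in cell d η γ, f x) (∫ x, f x) := by
  -- The closed cells agree a.e. with the half-open cells `I γ`, which partition `ℝ^d`.
  set I : (Fin d → ℤ) → Set (Ed d) :=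
    fun γ => WithLp.ofLp ⁻¹' univ.pi fun i => Ico (η * γ i) (η * γ i + η) with hI
  have hmemI : ∀ γ x, x ∈ I γ ↔ (fun i => ⌊x i / η⌋) = γ := fun γ x => by
    simp only [hI, mem_preimage, mem_univ_pi, mem_Ico_iff_floor_div_eq hη, funext_iff]
  have hae : ∀ γ, I γ =ᵐ[volume] cell d η γ := fun γ => by
    rw [cell_eq_preimage_ofLp, pi_univ_Icc]
    exact (PiLp.volume_preserving_ofLp (Fin d)).quasiMeasurePreserving.preimage_ae_eq
      (Measure.univ_pi_Ico_ae_eq_Icc)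
  have hcover : (⋃ γ, cell d η γ) = univ := by
    refine eq_univ_of_forall fun x => mem_iUnion.2 ⟨fun i => ⌊x i / η⌋, ?_⟩
    rw [cell_eq_preimage_ofLp]
    exact pi_mono (fun i _ => Ico_subset_Icc_self) ((hmemI _ x).2 rfl)
  have hdisj : Pairwise (Function.onFun (AEDisjoint volume) fun γ => cell d η γ) :=
    fun γ γ' hne => AEDisjoint.congr (Disjoint.aedisjoint <| disjoint_left.2 fun x hx hx' =>
      hne (((hmemI γ x).1 hx).symm.trans ((hmemI γ' x).1 hx'))) (hae γ).symm (hae γ').symm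
  have := hasSum_integral_iUnion_ae
    (fun γ => (isCompact_cell γ).isClosed.measurableSet.nullMeasurableSet) hdisj hf.integrableOn
  rwa [hcover, Measure.restrict_univ] at this

theorem integral_mul_le_of_forall_cell {w g : Ed d → ℝ} {K ρ : ℝ} (hη : 0 < η)
    (hg : ContDiff ℝ 1 g) (hgs : HasCompactSupport g) (hg0 : ∀ x, 0 ≤ g x) (hK : 0 ≤ K)
    (hw : AEStronglyMeasurable w) (hw0 : ∀ᵐ x, 0 ≤ w x) (hwK : ∀ᵐ x, w x ≤ K)
    (hcell : ∀ γ, ∫ x in cell d η γ, w x ≤ ρ * η ^ d) :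
    ∫ x, w x * g x ≤ ρ * (∫ x, g x) + K * 2 ^ d * (√d * η) * ∫ x, ‖fderiv ℝ g x‖ := by
  have hgi : Integrable g := hg.continuous.integrable_of_hasCompactSupport hgs
  have hDgi : Integrable fun x => ‖fderiv ℝ g x‖ :=
    (hg.continuous_fderiv one_ne_zero).norm.integrable_of_hasCompactSupport (hgs.fderiv ℝ).norm
  have hwgi : Integrable fun x => w x * g x := by
    refine hgi.bdd_mul (c := K) hw ?_
    filter_upwards [hw0, hwK] with x h0 hK
    rwa [Real.norm_of_nonneg h0]
  have hpercell : ∀ γ, ∫ x in cell d η γ, w x * g x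
      ≤ ρ * (∫ x in cell d η γ, g x)
        + K * 2 ^ d * (√d * η) * ∫ x in cell d η γ, ‖fderiv ℝ g x‖ := fun γ => by
    have h := (convex_cell γ).setIntegral_mul_le volume (isCompact_cell γ) hg hg0 hK
      hw.restrict (ae_restrict_of_ae hw0) (ae_restrict_of_ae hwK)
      (by rw [volume_real_cell hη.le]; exact hcell γ)
    rw [finrank_euclideanSpace_fin] at h
    refine h.trans ?_
    gcongr
    exact diam_cell_le hη.le γ
  exact hasSum_le hpercell (hasSum_integral_cell hη hwgi)
    (((hasSum_integral_cell hη hgi).mul_left ρ).add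
      ((hasSum_integral_cell hη hDgi).mul_left (K * 2 ^ d * (√d * η))))

end Cells

theorem integral_norm_matAct_sq_le {d n : ℕ} {W : Ed d → Matrix (Fin n) (Fin n) ℂ}
    {M η ρ : ℝ} (hWm : ∀ p q, Measurable fun x => W x p q) (hWM : ∀ᵐ x, frob (W x) ≤ M)
    (hη : 0 < η) (hρ : 0 ≤ ρ) (hcell : ∀ γ, ∫ x in cell d η γ, frob (W x) ^ 2 ≤ ρ * η ^ d)
    {u : Ed d → Cn n} (hu : ContDiff ℝ 1 u) (hus : HasCompactSupport u) :
    ∫ x, ‖matAct (W x) (u x)‖ ^ 2 ≤ (ρ + M ^ 2 * 2 ^ d * √d * η) * hnorm u ^ 2 := by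
  have hw : Measurable fun x => frob (W x) ^ 2 := by
    simp_rw [frob]
    fun_prop
  have hwM : ∀ᵐ x, ‖frob (W x) ^ 2‖ ≤ M ^ 2 := hWM.mono fun x hx => by
    rw [Real.norm_of_nonneg (sq_nonneg _)]
    exact pow_le_pow_left₀ (Real.sqrt_nonneg _) hx 2
  have hgs : HasCompactSupport fun x => ‖u x‖ ^ 2 :=
    hus.comp_left (g := fun z : Cn n => ‖z‖ ^ 2) (by simp)
  have hgi : Integrable fun x => ‖u x‖ ^ 2 :=
    (hu.continuous.norm.pow 2).integrable_of_hasCompactSupport hgs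
  have hWu : ∫ x, ‖matAct (W x) (u x)‖ ^ 2 ≤ ∫ x, frob (W x) ^ 2 * ‖u x‖ ^ 2 :=
    integral_mono_of_nonneg (ae_of_all _ fun x => sq_nonneg _)
      (hgi.bdd_mul hw.aestronglyMeasurable hwM) (ae_of_all _ fun x => norm_matAct_sq_le _ _)
  have hweighted := integral_mul_le_of_forall_cell hη (hu.norm_sq ℝ) hgs (fun x => sq_nonneg _)
    (sq_nonneg M) hw.aestronglyMeasurable (ae_of_all _ fun x => sq_nonneg _)
    (hwM.mono fun x hx => (le_abs_self _).trans hx) hcell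
  have hnorm_sq : hnorm u ^ 2 = (∫ x, ‖u x‖ ^ 2) + ∫ x, ‖fderiv ℝ u x‖ ^ 2 :=
    Real.sq_sqrt (by positivity)
  have hg : ∫ x, ‖u x‖ ^ 2 ≤ hnorm u ^ 2 := by
    rw [hnorm_sq]
    exact le_add_of_nonneg_right (by positivity)
  have hDg : ∫ x, ‖fderiv ℝ (fun y => ‖u y‖ ^ 2) x‖ ≤ hnorm u ^ 2 :=
    (integral_norm_fderiv_norm_sq_le hu hus).trans hnorm_sq.ge
  calc ∫ x, ‖matAct (W x) (u x)‖ ^ 2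
      ≤ ρ * (∫ x, ‖u x‖ ^ 2)
        + M ^ 2 * 2 ^ d * √d * η * ∫ x, ‖fderiv ℝ (fun y => ‖u y‖ ^ 2) x‖ :=
        hWu.trans (hweighted.trans_eq (by ring))
    _ ≤ ρ * hnorm u ^ 2 + M ^ 2 * 2 ^ d * √d * η * hnorm u ^ 2 := by gcongr
    _ = (ρ + M ^ 2 * 2 ^ d * √d * η) * hnorm u ^ 2 := by ring

theorem add_mul_le_sq_one_add_sqrt_mul {ρ η K : ℝ} (hρ : 0 ≤ ρ) (hη : 0 ≤ η) (hK : 0 ≤ K) :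
    ρ + K * η ≤ ((1 + √K) * (√ρ + √η)) ^ 2 := by
  have hρη : 0 ≤ √ρ * (√K * √η) := by positivity
  calc ρ + K * η = √ρ ^ 2 + (√K * √η) ^ 2 := by
        rw [mul_pow, Real.sq_sqrt hρ, Real.sq_sqrt hη, Real.sq_sqrt hK]
    _ ≤ (√ρ + √K * √η) ^ 2 := by nlinarith
    _ ≤ ((1 + √K) * (√ρ + √η)) ^ 2 := by
        gcongr
        nlinarith [Real.sqrt_nonneg ρ, Real.sqrt_nonneg η, Real.sqrt_nonneg K]

theorem stmt_8_general (d n : ℕ) (M : ℝ) :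
    ∃ C : ℝ, 0 < C ∧
      ∀ (W : Ed d → Matrix (Fin n) (Fin n) ℂ),
        (∀ p q, Measurable fun x => W x p q) →
        (∀ᵐ x, frob (W x) ≤ M) →
        ∀ (η ρ : ℝ), 0 < η → η ≤ 1 → 0 ≤ ρ →
        (∀ γ : Fin d → ℤ, (η ^ d)⁻¹ * ∫ x in cell d η γ, (frob (W x)) ^ 2 ≤ ρ) →
        ∀ u : Ed d → Cn n, ContDiff ℝ 1 u → HasCompactSupport u →
          Real.sqrt (∫ x, ‖matAct (W x) (u x)‖ ^ 2)
            ≤ C * (Real.sqrt ρ + Real.sqrt η) * hnorm u := by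
  refine ⟨1 + √(M ^ 2 * 2 ^ d * √d), by positivity, ?_⟩
  intro W hWm hWM η ρ hη _ hρ hcells u hu hus
  have hcell : ∀ γ, ∫ x in cell d η γ, frob (W x) ^ 2 ≤ ρ * η ^ d := fun γ => by
    rw [mul_comm, ← inv_mul_le_iff₀ (by positivity)]
    exact hcells γ
  refine Real.sqrt_le_iff.2 ⟨mul_nonneg (by positivity) (Real.sqrt_nonneg _), ?_⟩
  refine (integral_norm_matAct_sq_le hWm hWM hη hρ hcell hu hus).trans ?_
  rw [mul_pow]
  gcongr
  exact add_mul_le_sq_one_add_sqrt_mul hρ hη.le (by positivity)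

/-- Forward direction of Theorem 2.6 (estimate (2.21)) on `Ω = ℝ^d`:
if the cell-averaged `L²` norms `η^{-d}∫_{□_γ^η}|W|²` are at most `ρ` for every
`γ ∈ ℤ^d`, then `‖Wu‖_{L²} ≤ C(ρ^{1/2} + η^{1/2})‖u‖_{H¹}` for every `C¹` compactly
supported `u`, with `C` depending only on `d`, `n`, `M`. -/
theorem stmt_8 (d n : ℕ) (hd : 1 ≤ d) (hn : 1 ≤ n) (M : ℝ) (hM : 0 ≤ M) :
    ∃ C : ℝ, 0 < C ∧
      ∀ (W : Ed d → Matrix (Fin n) (Fin n) ℂ),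
        (∀ p q, Measurable fun x => W x p q) →
        (∀ᵐ x, frob (W x) ≤ M) →
        ∀ (η ρ : ℝ), 0 < η → η ≤ 1 → 0 ≤ ρ →
        (∀ γ : Fin d → ℤ, (η ^ d)⁻¹ * ∫ x in cell d η γ, (frob (W x)) ^ 2 ≤ ρ) →
        ∀ u : Ed d → Cn n, ContDiff ℝ 1 u → HasCompactSupport u →
          Real.sqrt (∫ x, ‖matAct (W x) (u x)‖ ^ 2)
            ≤ C * (Real.sqrt ρ + Real.sqrt η) * hnorm u :=
  stmt_8_general d n M

end
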